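/- Assume the deterministic Skorokhod setup: f : ℝ → ℝ is 1-Lipschitz, D = {(x₁,x₂) ∈ ℝ² : x₂ > f(x₁)}, K = {(x₁,x₂) ∈ ℝ² : x₂ > |x₁|} with closure K̄ = {x₂ ≥ |x₁|}; X, Y : [0,∞) → ℝ² are continuous, take values in the closure D̄ = {x₂ ≥ f(x₁)}, and satisfy X₀ = Y₀; moreover X_t = X₀ + w_t + A_t and Y_t = Y₀ + w_t + B_t for all t ≥ 0, where w, A, B : [0,∞) → ℝ² are continuous with w₀ = A₀ = B₀ = 0, A_t − A_s ∈ K̄ and B_t − B_s ∈ K̄ whenever 0 ≤ s ≤ t, A is constant on every interval on which X remains in D, and B is constant on every interval on which Y remains in D. Define V : [0,∞) → ℝ² by V_t = X_t if X¹_t < Y¹_t and V_t = Y_t otherwise, and set C_t = V_t − V₀ − w_t. Then C has increments in the closed cone: C_t − C_s ∈ K̄ for all 0 ≤ s ≤ t. -/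

import Mathlib

/-!
The difference `X - Y = A - B` never enters the open cone `K`: at the last time `τ` before it
would, `X - Y ∈ K` forces `X` into the open region `D` (the graph of a 1-Lipschitz function
cannot climb as fast as the cone), so `A` is frozen on `[τ, u]` and `X - Y` can only move by
`-(B u - B τ) ∈ -K̄`, which cannot carry a point outside `K` into `K`. By symmetry `Y - X ∉ K`
as well, so `X = Y` whenever their first coordinates agree. Hence `C` follows `A` or `B`, and
switches between them only at a crossing time `u` with `A u = B u`, which splits an increment
of `C` into an increment of `A` and one of `B`.
-/

open Set

lemma abs_fst_add_le_snd_add {a b : ℝ × ℝ} (ha : |a.1| ≤ a.2) (hb : |b.1| ≤ b.2) :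
    |(a + b).1| ≤ (a + b).2 :=
  (abs_add_le _ _).trans (add_le_add ha hb)

lemma abs_fst_add_lt_snd_add {a b : ℝ × ℝ} (ha : |a.1| < a.2) (hb : |b.1| ≤ b.2) :
    |(a + b).1| < (a + b).2 :=
  (abs_add_le _ _).trans_lt (add_lt_add_of_lt_of_le ha hb)

lemma LipschitzWith.apply_fst_lt_snd_of_abs_fst_sub_lt {f : ℝ → ℝ} (hf : LipschitzWith 1 f)
    {x y : ℝ × ℝ} (hy : f y.1 ≤ y.2) (hxy : |(x - y).1| < (x - y).2) : f x.1 < x.2 := by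
  have hlip : f x.1 - f y.1 ≤ |x.1 - y.1| := by
    simpa [Real.dist_eq] using (le_abs_self _).trans (hf.dist_le_mul x.1 y.1)
  simp only [Prod.fst_sub, Prod.snd_sub] at hxy
  linarith

lemma exists_last_mem_of_continuousOn {E : Type*} [TopologicalSpace E] {s : Set E}
    (hs : IsClosed s) {g : ℝ → E} {a b : ℝ} (hab : a ≤ b) (hg : ContinuousOn g (Icc a b))
    (ha : g a ∈ s) : ∃ τ ∈ Icc a b, g τ ∈ s ∧ ∀ r ∈ Ioc τ b, g r ∉ s := by
  set S := Icc a b ∩ g ⁻¹' s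
  have hbdd : BddAbove S := ⟨b, fun r hr => hr.1.2⟩
  have hτ : sSup S ∈ S :=
    (hg.preimage_isClosed_of_isClosed isClosed_Icc hs).csSup_mem ⟨a, ⟨left_mem_Icc.2 hab, ha⟩⟩
      hbdd
  refine ⟨sSup S, hτ.1, hτ.2, fun r hr hrs => ?_⟩
  have hrS : r ∈ S := ⟨⟨hτ.1.1.trans hr.1.le, hr.2⟩, hrs⟩
  exact (le_csSup hbdd hrS).not_gt hr.1

lemma snd_sub_le_abs_fst_sub {f : ℝ → ℝ} (hf : LipschitzWith 1 f) {X Y A B : ℝ → ℝ × ℝ}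
    (hXc : ContinuousOn X (Ici 0)) (hYc : ContinuousOn Y (Ici 0))
    (hYD : ∀ t, 0 ≤ t → f (Y t).1 ≤ (Y t).2) (h0 : X 0 = Y 0)
    (hXY : ∀ t, 0 ≤ t → X t - Y t = A t - B t)
    (hBincr : ∀ s t, 0 ≤ s → s ≤ t → |(B t - B s).1| ≤ (B t - B s).2)
    (hAconst : ∀ s t, 0 ≤ s → s ≤ t →
      (∀ u, u ∈ Ioo s t → f (X u).1 < (X u).2) → A t = A s)
    {u : ℝ} (hu : 0 ≤ u) : (X u - Y u).2 ≤ |(X u - Y u).1| := by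
  by_contra! hK
  have hclosed : IsClosed {v : ℝ × ℝ | v.2 ≤ |v.1|} :=
    isClosed_le continuous_snd continuous_fst.abs
  obtain ⟨τ, hτ, hτK, hafter⟩ := exists_last_mem_of_continuousOn hclosed hu
    ((hXc.sub hYc).mono fun r hr => hr.1) (by simp [h0])
  have hτ0 : 0 ≤ τ := hτ.1
  have hτu : τ < u := hτ.2.lt_of_ne fun h => (h ▸ hτK : _ ≤ _).not_gt hK
  have hXD : ∀ r ∈ Ioo τ u, f (X r).1 < (X r).2 := fun r hr =>
    hf.apply_fst_lt_snd_of_abs_fst_sub_lt (hYD r (hτ0.trans hr.1.le))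
      (not_le.1 (hafter r ⟨hr.1, hr.2.le⟩))
  have hA : A u = A τ := hAconst τ u hτ0 hτu.le hXD
  have hjump : X τ - Y τ = (X u - Y u) + (B u - B τ) := by
    rw [hXY u hu, hXY τ hτ0, hA]; abel
  have hτK' := abs_fst_add_lt_snd_add hK (hBincr τ u hτ0 hτu.le)
  rw [← hjump] at hτK'
  exact hτK.not_gt hτK'

lemma eq_of_fst_eq {f : ℝ → ℝ} (hf : LipschitzWith 1 f) {X Y A B : ℝ → ℝ × ℝ}
    (hXc : ContinuousOn X (Ici 0)) (hYc : ContinuousOn Y (Ici 0))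
    (hXD : ∀ t, 0 ≤ t → f (X t).1 ≤ (X t).2) (hYD : ∀ t, 0 ≤ t → f (Y t).1 ≤ (Y t).2)
    (h0 : X 0 = Y 0) (hXY : ∀ t, 0 ≤ t → X t - Y t = A t - B t)
    (hAincr : ∀ s t, 0 ≤ s → s ≤ t → |(A t - A s).1| ≤ (A t - A s).2)
    (hBincr : ∀ s t, 0 ≤ s → s ≤ t → |(B t - B s).1| ≤ (B t - B s).2)
    (hAconst : ∀ s t, 0 ≤ s → s ≤ t →
      (∀ u, u ∈ Ioo s t → f (X u).1 < (X u).2) → A t = A s)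
    (hBconst : ∀ s t, 0 ≤ s → s ≤ t →
      (∀ u, u ∈ Ioo s t → f (Y u).1 < (Y u).2) → B t = B s)
    {u : ℝ} (hu : 0 ≤ u) (h1 : (X u).1 = (Y u).1) : X u = Y u := by
  have hYX : ∀ t, 0 ≤ t → Y t - X t = B t - A t := fun t ht => by
    rw [← neg_sub, hXY t ht, neg_sub]
  have hXY_le := snd_sub_le_abs_fst_sub hf hXc hYc hYD h0 hXY hBincr hAconst hu
  have hYX_le := snd_sub_le_abs_fst_sub hf hYc hXc hXD h0.symm hYX hAincr hBconst hu
  simp only [Prod.fst_sub, Prod.snd_sub, h1, sub_self, abs_zero] at hXY_le hYX_le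
  exact Prod.ext h1 (by linarith)

lemma exists_mem_Icc_fst_eq {X Y : ℝ → ℝ × ℝ} {s t : ℝ} (hst : s ≤ t)
    (hXc : ContinuousOn X (Icc s t)) (hYc : ContinuousOn Y (Icc s t))
    (h0 : (0 : ℝ) ∈ uIcc ((X s).1 - (Y s).1) ((X t).1 - (Y t).1)) :
    ∃ u ∈ Icc s t, (X u).1 = (Y u).1 := by
  rw [← uIcc_of_le hst] at hXc hYc ⊢
  obtain ⟨u, hu, hgu⟩ := intermediate_value_uIcc (hXc.fst.sub hYc.fst) h0
  exact ⟨u, hu, sub_eq_zero.1 hgu⟩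

lemma abs_fst_sub_le_snd_sub_of_eq {A B : ℝ → ℝ × ℝ}
    (hAincr : ∀ s t, 0 ≤ s → s ≤ t → |(A t - A s).1| ≤ (A t - A s).2)
    (hBincr : ∀ s t, 0 ≤ s → s ≤ t → |(B t - B s).1| ≤ (B t - B s).2)
    {s u t : ℝ} (hs : 0 ≤ s) (hu : u ∈ Icc s t) (hAB : A u = B u) :
    |(B t - A s).1| ≤ (B t - A s).2 := by
  have h := abs_fst_add_le_snd_add (hBincr u t (hs.trans hu.1) hu.2) (hAincr s u hs hu.1)
  rwa [hAB, sub_add_sub_cancel] at h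

theorem coupled_local_time_increments_mem_closed_cone_general
    (f : ℝ → ℝ) (hf : LipschitzWith 1 f)
    (X Y w A B : ℝ → ℝ × ℝ)
    (hXc : ContinuousOn X (Set.Ici 0)) (hYc : ContinuousOn Y (Set.Ici 0))
    (hXD : ∀ t, 0 ≤ t → f (X t).1 ≤ (X t).2)
    (hYD : ∀ t, 0 ≤ t → f (Y t).1 ≤ (Y t).2)
    (h0 : X 0 = Y 0)
    (hXeq : ∀ t, 0 ≤ t → X t = X 0 + w t + A t)
    (hYeq : ∀ t, 0 ≤ t → Y t = Y 0 + w t + B t)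
    (hAincr : ∀ s t, 0 ≤ s → s ≤ t → |(A t - A s).1| ≤ (A t - A s).2)
    (hBincr : ∀ s t, 0 ≤ s → s ≤ t → |(B t - B s).1| ≤ (B t - B s).2)
    (hAconst : ∀ s t, 0 ≤ s → s ≤ t →
      (∀ u, u ∈ Set.Ioo s t → f (X u).1 < (X u).2) → A t = A s)
    (hBconst : ∀ s t, 0 ≤ s → s ≤ t →
      (∀ u, u ∈ Set.Ioo s t → f (Y u).1 < (Y u).2) → B t = B s)
    (V C : ℝ → ℝ × ℝ)
    (hV : ∀ t, V t = if (X t).1 < (Y t).1 then X t else Y t)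
    (hC : ∀ t, C t = V t - V 0 - w t) :
    ∀ s t, 0 ≤ s → s ≤ t → |(C t - C s).1| ≤ (C t - C s).2 := by
  have hXY : ∀ t, 0 ≤ t → X t - Y t = A t - B t := fun t ht => by
    rw [hXeq t ht, hYeq t ht, h0]; abel
  have hV0 : V 0 = Y 0 := by rw [hV 0, h0, if_neg (lt_irrefl _)]
  have hCeq : ∀ t, 0 ≤ t → C t = if (X t).1 < (Y t).1 then A t else B t := fun t ht => by
    rw [hC t, hV t, hV0]
    split_ifs
    · rw [hXeq t ht, h0]; abel
    · rw [hYeq t ht]; abel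
  have hcross : ∀ s t, 0 ≤ s → s ≤ t → (0 : ℝ) ∈ uIcc ((X s).1 - (Y s).1) ((X t).1 - (Y t).1) →
      ∃ u ∈ Icc s t, A u = B u := fun s t hs hst h0mem => by
    have hsub : Icc s t ⊆ Ici 0 := fun r hr => hs.trans hr.1
    obtain ⟨u, hu, h1⟩ := exists_mem_Icc_fst_eq hst (hXc.mono hsub) (hYc.mono hsub) h0mem
    have hXYu := eq_of_fst_eq hf hXc hYc hXD hYD h0 hXY hAincr hBincr hAconst hBconst
      (hsub hu) h1
    exact ⟨u, hu, sub_eq_zero.1 (by rw [← hXY u (hsub hu), hXYu, sub_self])⟩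
  intro s t hs hst
  rw [hCeq t (hs.trans hst), hCeq s hs]
  split_ifs with ht hs'
  · exact hAincr s t hs hst
  · obtain ⟨u, hu, hAB⟩ := hcross s t hs hst (mem_uIcc.2 (Or.inr ⟨by linarith, by linarith⟩))
    exact abs_fst_sub_le_snd_sub_of_eq hBincr hAincr hs hu hAB.symm
  · obtain ⟨u, hu, hAB⟩ := hcross s t hs hst (mem_uIcc.2 (Or.inl ⟨by linarith, by linarith⟩))
    exact abs_fst_sub_le_snd_sub_of_eq hAincr hBincr hs hu hAB
  · exact hBincr s t hs hst

/-- Deterministic Skorokhod setup: the "local time" part C of the coupled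
process V has increments in the closed cone K̄ = {(x₁,x₂) : x₂ ≥ |x₁|}. -/
theorem coupled_local_time_increments_mem_closed_cone
    (f : ℝ → ℝ) (hf : LipschitzWith 1 f)
    (X Y w A B : ℝ → ℝ × ℝ)
    (hXc : ContinuousOn X (Set.Ici 0)) (hYc : ContinuousOn Y (Set.Ici 0))
    (hwc : ContinuousOn w (Set.Ici 0))
    (hAc : ContinuousOn A (Set.Ici 0)) (hBc : ContinuousOn B (Set.Ici 0))
    (hXD : ∀ t, 0 ≤ t → f (X t).1 ≤ (X t).2)
    (hYD : ∀ t, 0 ≤ t → f (Y t).1 ≤ (Y t).2)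
    (h0 : X 0 = Y 0)
    (hXeq : ∀ t, 0 ≤ t → X t = X 0 + w t + A t)
    (hYeq : ∀ t, 0 ≤ t → Y t = Y 0 + w t + B t)
    (hw0 : w 0 = 0) (hA0 : A 0 = 0) (hB0 : B 0 = 0)
    (hAincr : ∀ s t, 0 ≤ s → s ≤ t → |(A t - A s).1| ≤ (A t - A s).2)
    (hBincr : ∀ s t, 0 ≤ s → s ≤ t → |(B t - B s).1| ≤ (B t - B s).2)
    (hAconst : ∀ s t, 0 ≤ s → s ≤ t →
      (∀ u, u ∈ Set.Ioo s t → f (X u).1 < (X u).2) → A t = A s)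
    (hBconst : ∀ s t, 0 ≤ s → s ≤ t →
      (∀ u, u ∈ Set.Ioo s t → f (Y u).1 < (Y u).2) → B t = B s)
    (V C : ℝ → ℝ × ℝ)
    (hV : ∀ t, V t = if (X t).1 < (Y t).1 then X t else Y t)
    (hC : ∀ t, C t = V t - V 0 - w t) :
    ∀ s t, 0 ≤ s → s ≤ t → |(C t - C s).1| ≤ (C t - C s).2 :=
  coupled_local_time_increments_mem_closed_cone_general f hf X Y w A B hXc hYc hXD hYD h0 hXeq hYeq
    hAincr hBincr hAconst hBconst V C hV hC
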